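/- arXiv:1612.08138 — 3 statements merged into one kernel-verified Lean document; each statement's English description precedes it below -/
import Mathlib

section
/- Let 𝔽 be a poset (of forests, ordered by inclusion), let P : 𝔽 → 𝔽 be a forest projection and let 𝒢 assign to each element of 𝔽 a finite set of 'cuts', such that P and 𝒢 are compatible: for every interval M in the image structure of P, every cut e ∈ 𝒢(b(M)), and every cut set 𝒞, one has 𝒞 ∪ {e} ∈ 𝔠^P(M) if and only if 𝒞 \ {e} ∈ 𝔠^P(M), where 𝔠^P(M) = {𝒞 : P⁻¹_𝒞[s(M)] = M}. Then for each such interval M, the collection of intervals of cut sets 𝔊(M) = {[𝒞, 𝒞 ⊔ 𝒢(b(M))] : 𝒞 ∈ 𝔠^P(M), 𝒞 ∩ 𝒢(b(M)) = ∅} forms a partition of 𝔠^P(M). -/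
variable {F E : Type*}

/-- `P⁻¹_𝒞[S] = P⁻¹[S] ∩ 𝔽_𝒞`, the preimage of `S` restricted to the forests
compatible with the cut set `𝒞`. -/
def PinvC (P : F → F) (compat : Set E → Set F) (C : Set E) (S : F) : Set F :=
  P ⁻¹' {S} ∩ compat C

/-- `𝔠^P(M) = {𝒞 : P⁻¹_𝒞[s(M)] = M}`, the cut sets generating the interval `M`. -/
def cutsGenerating (P : F → F) (compat : Set E → Set F) (sM : F) (M : Set F) :
    Set (Set E) :=
  {C : Set E | PinvC P compat C sM = M}

/-- The family of intervals of cut sets `[𝒞, 𝒞 ⊔ G₀]` with `𝒞 ∈ Q`, `𝒞 ∩ G₀ = ∅`. -/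
def cutIntervals (Q : Set (Set E)) (G₀ : Set E) : Set (Set (Set E)) :=
  {I : Set (Set E) | ∃ C ∈ Q, C ∩ G₀ = ∅ ∧ I = Set.Icc C (C ∪ G₀)}

/-
Membership in `𝔠^P(M)` only sees a cut set outside `G = 𝒢(b(M))`: compatibility says it does not
change when a single cut of `G` is removed, and since `G` is finite, removing the cuts one at a time
gives `𝒞 ∈ 𝔠^P(M) ↔ 𝒞 \ G ∈ 𝔠^P(M)`. The interval `[𝒞, 𝒞 ⊔ G]` with `𝒞 ∩ G = ∅` is exactly the
fibre `{𝒟 : 𝒟 \ G = 𝒞}` of the map `𝒟 ↦ 𝒟 \ G`, so these intervals are the fibres of that map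
over `𝔠^P(M)` and hence partition it.
-/

namespace CutInterval

variable {Q : Set (Set E)} {G C D : Set E}

theorem mem_iff_sdiff_singleton_mem {e : E}
    (hQ : ∀ C : Set E, C ∪ {e} ∈ Q ↔ C \ {e} ∈ Q) : C ∈ Q ↔ C \ {e} ∈ Q := by
  by_cases he : e ∈ C
  · simpa [Set.union_eq_self_of_subset_right (Set.singleton_subset_iff.mpr he)] using hQ C
  · rw [Set.sdiff_singleton_eq_self he]

theorem mem_iff_sdiff_mem_of_finite (hG : G.Finite)
    (hQ : ∀ e ∈ G, ∀ C : Set E, C ∪ {e} ∈ Q ↔ C \ {e} ∈ Q) (C : Set E) :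
    C ∈ Q ↔ C \ G ∈ Q := by
  induction G, hG using Set.Finite.induction_on generalizing C with
  | empty => simp
  | @insert a s _ _ ih =>
    rw [Set.insert_eq, Set.union_comm, ← Set.sdiff_sdiff]
    exact (ih (fun e he => hQ e (Or.inr he)) C).trans
      (mem_iff_sdiff_singleton_mem (hQ a (Or.inl rfl)))

theorem sdiff_eq_of_mem_Icc (hCG : C ∩ G = ∅) (hD : D ∈ Set.Icc C (C ∪ G)) : D \ G = C := by
  obtain ⟨hCD, hDCG⟩ := hD
  apply Set.Subset.antisymm
  · exact Set.sdiff_subset_iff.mpr (Set.union_comm C G ▸ hDCG)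
  · exact Set.subset_sdiff.mpr ⟨hCD, Set.disjoint_iff_inter_eq_empty.mpr hCG⟩

theorem mem_Icc_sdiff_sdiff_union (D G : Set E) : D ∈ Set.Icc (D \ G) (D \ G ∪ G) :=
  ⟨Set.sdiff_subset, by rw [Set.sdiff_union_self]; exact Set.subset_union_left⟩

theorem pairwiseDisjoint_cutIntervals (Q : Set (Set E)) (G : Set E) :
    (cutIntervals Q G).PairwiseDisjoint id := by
  rintro _ ⟨C, -, hCG, rfl⟩ _ ⟨C', -, hC'G, rfl⟩ hne
  refine Set.disjoint_left.mpr fun D hD hD' => hne ?_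
  rw [← sdiff_eq_of_mem_Icc hCG hD, ← sdiff_eq_of_mem_Icc hC'G hD']

variable (hQ : ∀ C : Set E, C ∈ Q ↔ C \ G ∈ Q)
include hQ

theorem subset_of_mem_cutIntervals {I : Set (Set E)} (hI : I ∈ cutIntervals Q G) : I ⊆ Q := by
  obtain ⟨C, hCQ, hCG, rfl⟩ := hI
  intro D hD
  exact (hQ D).mpr (sdiff_eq_of_mem_Icc hCG hD ▸ hCQ)

theorem sUnion_cutIntervals : ⋃₀ cutIntervals Q G = Q := by
  refine Set.Subset.antisymm (Set.sUnion_subset fun I hI => subset_of_mem_cutIntervals hQ hI) ?_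
  intro D hD
  exact ⟨_, ⟨D \ G, (hQ D).mp hD, Set.sdiff_inter_self, rfl⟩, mem_Icc_sdiff_sdiff_union D G⟩

end CutInterval

open CutInterval in
theorem compatible_cut_intervals_partition_general
    (P : F → F) (compat : Set E → Set F) (𝒢 : F → Set E)
    (h𝒢fin : ∀ S : F, (𝒢 S).Finite)
    (sM bM : F) (M : Set F)
    (hcompat : ∀ e ∈ 𝒢 bM, ∀ C : Set E,
      (C ∪ {e} ∈ cutsGenerating P compat sM M ↔
        C \ {e} ∈ cutsGenerating P compat sM M)) :
    (∀ I ∈ cutIntervals (cutsGenerating P compat sM M) (𝒢 bM),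
        I.Nonempty ∧ I ⊆ cutsGenerating P compat sM M) ∧
      (cutIntervals (cutsGenerating P compat sM M) (𝒢 bM)).PairwiseDisjoint id ∧
      ⋃₀ cutIntervals (cutsGenerating P compat sM M) (𝒢 bM)
        = cutsGenerating P compat sM M := by
  have hQ := mem_iff_sdiff_mem_of_finite (h𝒢fin bM) hcompat
  refine ⟨fun I hI => ⟨?_, subset_of_mem_cutIntervals hQ hI⟩,
    pairwiseDisjoint_cutIntervals _ _, sUnion_cutIntervals hQ⟩
  obtain ⟨C, -, -, rfl⟩ := hI
  exact Set.nonempty_Icc.mpr Set.subset_union_left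

/-- If the forest projection `P` and the cut rule `𝒢` are compatible
(adding or removing a cut `e ∈ 𝒢(b(M))` does not change membership in `𝔠^P(M)`), then
for each interval `M = [s(M), b(M)]` arising from `P`, the collection of intervals of
cut sets `𝔊(M) = {[𝒞, 𝒞 ⊔ 𝒢(b(M))] : 𝒞 ∈ 𝔠^P(M), 𝒞 ∩ 𝒢(b(M)) = ∅}` forms a
partition of `𝔠^P(M)`: its members are nonempty subsets of `𝔠^P(M)`, pairwise
disjoint, and their union is all of `𝔠^P(M)`. -/
theorem compatible_cut_intervals_partition [PartialOrder F]
    (P : F → F) (compat : Set E → Set F) (𝒢 : F → Set E)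
    (h𝒢fin : ∀ S : F, (𝒢 S).Finite)
    (sM bM : F) (hle : sM ≤ bM) (M : Set F) (hM : M = Set.Icc sM bM)
    (hMne : M.Nonempty) (hMmem : ∃ C : Set E, PinvC P compat C sM = M)
    (hcompat : ∀ e ∈ 𝒢 bM, ∀ C : Set E,
      (C ∪ {e} ∈ cutsGenerating P compat sM M ↔
        C \ {e} ∈ cutsGenerating P compat sM M)) :
    (∀ I ∈ cutIntervals (cutsGenerating P compat sM M) (𝒢 bM),
        I.Nonempty ∧ I ⊆ cutsGenerating P compat sM M) ∧
      (cutIntervals (cutsGenerating P compat sM M) (𝒢 bM)).PairwiseDisjoint id ∧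
      ⋃₀ cutIntervals (cutsGenerating P compat sM M) (𝒢 bM)
        = cutsGenerating P compat sM M :=
  compatible_cut_intervals_partition_general P compat 𝒢 h𝒢fin sM bM M hcompat
end

section
/- Fix a scale assignment n : E → ℕ on a finite edge set E of an ambient tree, and for a forest ℱ of divergent subtrees and a subtree S ∈ ℱ, define int^n_ℱ(S) as the minimum of n over internal edges of S not internal to children of S in ℱ, and ext^n_ℱ(S) as the maximum of n over external edges of S internal to the immediate ancestor of S in ℱ. Define P^n[ℱ] = {S ∈ ℱ : int^n_ℱ(S) ≤ ext^n_ℱ(S)}. Then for every S ∈ ℱ, one has int^n_ℱ(S) = int^n_{P^n[ℱ]}(S) and ext^n_ℱ(S) = ext^n_{P^n[ℱ]}(S). -/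
variable {V ε : Type*}

/-- `ℰ^int(S)`: edges with all endpoints in the node set `S`. -/
def Eint (inc : ε → Set V) (S : Set V) : Set ε := {e | inc e ⊆ S}

/-- `ℰ^ext(S)`: edges touching but not inside `S`. -/
def Eext (inc : ε → Set V) (S : Set V) : Set ε :=
  {e | ¬ inc e ⊆ S ∧ (inc e ∩ S).Nonempty}

/-- `C_ℱ(S)`: the maximal elements of `ℱ` strictly contained in `S`. -/
def childrenF (F : Set (Set V)) (S : Set V) : Set (Set V) :=
  {T | T ∈ F ∧ T ⊂ S ∧ ∀ U ∈ F, T ⊂ U → ¬ U ⊂ S}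

/-- `ℰ^int_ℱ(S) = ℰ^int(S) \ ⋃_{T ∈ C_ℱ(S)} ℰ^int(T)`. -/
def EintF (inc : ε → Set V) (F : Set (Set V)) (S : Set V) : Set ε :=
  Eint inc S \ ⋃ T ∈ childrenF F S, Eint inc T

/-- `ℰ^ext_ℱ(S) = ℰ^ext(S) ∩ ℰ^int(A_ℱ(S))`, where `A_ℱ(S)` is the minimal element of
`ℱ` strictly containing `S` (the intersection over all strict supersets in `ℱ`,
which for a laminar finite family equals `ℰ^int` of the immediate ancestor, and is
everything when there is no ancestor). -/
def EextF (inc : ε → Set V) (F : Set (Set V)) (S : Set V) : Set ε :=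
  Eext inc S ∩ ⋂ T ∈ {T | T ∈ F ∧ S ⊂ T}, Eint inc T

/-- `int^n_ℱ(S)`: the minimum scale over internal edges modulo `ℱ`. -/
noncomputable def intScale (inc : ε → Set V) (n : ε → ℕ) (F : Set (Set V))
    (S : Set V) : ℕ :=
  sInf (n '' EintF inc F S)

/-- `ext^n_ℱ(S)`: the maximum scale over external edges modulo `ℱ`. -/
noncomputable def extScale (inc : ε → Set V) (n : ε → ℕ) (F : Set (Set V))
    (S : Set V) : ℕ :=
  sSup (n '' EextF inc F S)

/-- `P^n[ℱ]`: the projection onto safe forests. -/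
noncomputable def safeProj (inc : ε → Set V) (n : ε → ℕ) (F : Set (Set V)) :
    Set (Set V) :=
  {S ∈ F | intScale inc n F S ≤ extScale inc n F S}

/-!
Everything rests on `int_ℱ(S) ≤ ext_ℱ(T)` for a child `T` of `S`: an external edge of `T`
internal to `S` lies in no other child, so it is internal to `S` modulo `ℱ`.
An edge that becomes internal to `S` modulo `P^n[ℱ]` sits inside a descending chain of unsafe
subtrees `T ⊃ T' ⊃ …` below `S`, and `ext(T) < int(T) ≤ ext(T') < ⋯` shows that its scale
exceeds `ext_ℱ(T) ≥ int_ℱ(S)`; so the minimum is unchanged. Dually, an edge that becomes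
external to `S` modulo `P^n[ℱ]` is external to an ascending chain of unsafe ancestors
`A ⊂ A' ⊂ …` of `S`, and the mirror-image chain keeps its scale below `int_ℱ(A) ≤ ext_ℱ(S)`.
-/

open Set

/-- The properties of a forest `ℱ` of subtrees of the ambient tree that the classification uses. -/
structure IsSubtreeForest (inc : ε → Set V) (F : Set (Set V)) : Prop where
  finite : F.Finite
  laminar : ∀ S ∈ F, ∀ T ∈ F, S ⊆ T ∨ T ⊆ S ∨ S ∩ T = ∅
  exists_cross : ∀ S ∈ F, ∀ T ∈ F, S ⊂ T → (Eext inc S ∩ Eint inc T).Nonempty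
  exists_ext : ∀ S ∈ F, (Eext inc S).Nonempty

section

variable {inc : ε → Set V} {n : ε → ℕ} {F G : Set (Set V)} {S T A : Set V} {e : ε}

lemma Eint_mono (h : S ⊆ T) : Eint inc S ⊆ Eint inc T := fun _ he => he.trans h

lemma nonempty_of_Eext_nonempty (h : (Eext inc S).Nonempty) : S.Nonempty := by
  obtain ⟨e, -, v, -, hv⟩ := h
  exact ⟨v, hv⟩

lemma exists_mem_childrenF_superset (hF : F.Finite) (hT : T ∈ F) (hTS : T ⊂ S) :
    ∃ U ∈ childrenF F S, T ⊆ U := by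
  obtain ⟨U, hTU, hmax⟩ :=
    (hF.subset fun U (hU : U ∈ F ∧ U ⊂ S) => hU.1).exists_le_maximal ⟨hT, hTS⟩
  refine ⟨U, ⟨hmax.prop.1, hmax.prop.2, fun W hW hUW hWS => ?_⟩, hTU⟩
  exact hUW.not_subset (hmax.le_of_ge ⟨hW, hWS⟩ hUW.subset)

lemma exists_mem_childrenF_of_ssubset (hF : F.Finite) (hS : S ∈ F) (hT : T ∈ F)
    (hST : S ⊂ T) : ∃ A ∈ F, S ∈ childrenF F A ∧ A ⊆ T := by
  obtain ⟨A, hAT, hmin⟩ :=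
    (hF.subset fun U (hU : U ∈ F ∧ S ⊂ U) => hU.1).exists_le_minimal ⟨hT, hST⟩
  refine ⟨A, hmin.prop.1, ⟨hS, hmin.prop.2, fun W hW hSW hWA => ?_⟩, hAT⟩
  exact hWA.not_subset (hmin.le_of_le ⟨hW, hSW⟩ hWA.subset)

lemma exists_mem_childrenF_of_notMem_EintF (he : e ∈ Eint inc S)
    (h : e ∉ EintF inc F S) : ∃ T ∈ childrenF F S, e ∈ Eint inc T := by
  simpa [EintF, he] using h

lemma exists_mem_childrenF_of_notMem_EextF (hF : F.Finite) (hT : T ∈ F)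
    (he : e ∈ Eext inc T) (h : e ∉ EextF inc F T) :
    ∃ A ∈ F, T ∈ childrenF F A ∧ e ∈ Eext inc A := by
  obtain ⟨U, hU, hTU, heU⟩ : ∃ U ∈ F, T ⊂ U ∧ e ∉ Eint inc U := by
    simpa [EextF, he] using h
  obtain ⟨A, hA, hTA, hAU⟩ := exists_mem_childrenF_of_ssubset hF hT hU hTU
  obtain ⟨-, v, hve, hvT⟩ := he
  exact ⟨A, hA, hTA, fun heA => heU (Eint_mono hAU heA), v, hve, hTA.2.1.subset hvT⟩

lemma disjoint_of_mem_childrenF (hlam : ∀ S ∈ F, ∀ T ∈ F, S ⊆ T ∨ T ⊆ S ∨ S ∩ T = ∅)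
    {T T' : Set V} (hT : T ∈ childrenF F S) (hT' : T' ∈ childrenF F S) (hne : T ≠ T') :
    Disjoint T T' := by
  rcases hlam T hT.1 T' hT'.1 with h | h | h
  · exact absurd hT'.2.1 (hT.2.2 T' hT'.1 (h.ssubset_of_ne hne))
  · exact absurd hT.2.1 (hT'.2.2 T hT.1 (h.ssubset_of_ne hne.symm))
  · exact disjoint_iff_inter_eq_empty.mpr h

lemma Eext_inter_Eint_subset_EintF (hlam : ∀ S ∈ F, ∀ T ∈ F, S ⊆ T ∨ T ⊆ S ∨ S ∩ T = ∅)
    (hT : T ∈ childrenF F S) : Eext inc T ∩ Eint inc S ⊆ EintF inc F S := by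
  rintro e ⟨⟨heT, v, hve, hvT⟩, heS⟩
  refine ⟨heS, ?_⟩
  simp only [mem_iUnion, exists_prop, not_exists, not_and]
  intro T' hT' heT'
  obtain rfl | hne := eq_or_ne T' T
  · exact heT heT'
  · exact disjoint_left.mp (disjoint_of_mem_childrenF hlam hT' hT hne) (heT' hve) hvT

lemma EextF_subset_EintF (hlam : ∀ S ∈ F, ∀ T ∈ F, S ⊆ T ∨ T ⊆ S ∨ S ∩ T = ∅)
    (hS : S ∈ F) (hT : T ∈ childrenF F S) : EextF inc F T ⊆ EintF inc F S :=
  fun _ ⟨heT, heAnc⟩ =>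
    Eext_inter_Eint_subset_EintF hlam hT ⟨heT, mem_iInter₂.mp heAnc S ⟨hS, hT.2.1⟩⟩

lemma subset_of_mem_childrenF (hlam : ∀ S ∈ F, ∀ T ∈ F, S ⊆ T ∨ T ⊆ S ∨ S ∩ T = ∅)
    (hS : S.Nonempty) (hA : A ∈ F) (hSA : S ∈ childrenF F A) (hT : T ∈ F) (hST : S ⊂ T) :
    A ⊆ T := by
  rcases hlam A hA T hT with h | h | h
  · exact h
  · obtain rfl | hTA := h.eq_or_ssubset
    · exact subset_rfl
    · exact absurd hTA (hSA.2.2 T hT hST)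
  · obtain ⟨v, hv⟩ := hS
    exact absurd (h ▸ ⟨hSA.2.1.subset hv, hST.subset hv⟩ : v ∈ (∅ : Set V)) (notMem_empty v)

lemma Eext_inter_Eint_subset_EextF (hlam : ∀ S ∈ F, ∀ T ∈ F, S ⊆ T ∨ T ⊆ S ∨ S ∩ T = ∅)
    (hS : S.Nonempty) (hA : A ∈ F) (hSA : S ∈ childrenF F A) :
    Eext inc S ∩ Eint inc A ⊆ EextF inc F S :=
  fun _ ⟨heS, heA⟩ => ⟨heS, mem_iInter₂.mpr fun _ hT =>
    Eint_mono (subset_of_mem_childrenF hlam hS hA hSA hT.1 hT.2) heA⟩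

lemma EintF_nonempty_of_mem_childrenF
    (hlam : ∀ S ∈ F, ∀ T ∈ F, S ⊆ T ∨ T ⊆ S ∨ S ∩ T = ∅)
    (hcross : ∀ S ∈ F, ∀ T ∈ F, S ⊂ T → (Eext inc S ∩ Eint inc T).Nonempty)
    (hS : S ∈ F) (hT : T ∈ childrenF F S) : (EintF inc F S).Nonempty :=
  (hcross T hT.1 S hS hT.2.1).mono (Eext_inter_Eint_subset_EintF hlam hT)

namespace IsSubtreeForest

lemma EextF_nonempty (hF : IsSubtreeForest inc F) (hS : S ∈ F) :
    (EextF inc F S).Nonempty := by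
  by_cases hmax : ∃ T ∈ F, S ⊂ T
  · obtain ⟨T, hT, hST⟩ := hmax
    obtain ⟨A, hA, hSA, -⟩ := exists_mem_childrenF_of_ssubset hF.finite hS hT hST
    exact (hF.exists_cross S hS A hA hSA.2.1).mono <| Eext_inter_Eint_subset_EextF
      hF.laminar (nonempty_of_Eext_nonempty (hF.exists_ext S hS)) hA hSA
  · obtain ⟨e, he⟩ := hF.exists_ext S hS
    refine ⟨e, he, mem_iInter₂.mpr fun T hT => absurd ⟨T, hT.1, hT.2⟩ hmax⟩

lemma intScale_le_extScale [Finite ε] (hF : IsSubtreeForest inc F) (hS : S ∈ F)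
    (hT : T ∈ childrenF F S) : intScale inc n F S ≤ extScale inc n F T := by
  obtain ⟨e, he⟩ := hF.EextF_nonempty hT.1
  calc intScale inc n F S ≤ n e := Nat.sInf_le ⟨e, EextF_subset_EintF hF.laminar hS hT he, rfl⟩
    _ ≤ extScale inc n F T := le_csSup (toFinite _).bddAbove ⟨e, he, rfl⟩

end IsSubtreeForest

lemma EintF_subset_EintF_of_subset (hF : F.Finite) (hGF : G ⊆ F) :
    EintF inc F S ⊆ EintF inc G S := by
  refine fun e ⟨heS, he⟩ => ⟨heS, fun heG => he ?_⟩
  obtain ⟨T, hT, heT⟩ : ∃ T ∈ childrenF G S, e ∈ Eint inc T := by simpa using heG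
  obtain ⟨U, hU, hTU⟩ := exists_mem_childrenF_superset hF (hGF hT.1) hT.2.1
  exact mem_biUnion hU (Eint_mono hTU heT)

lemma EextF_subset_EextF_of_subset (hGF : G ⊆ F) : EextF inc F S ⊆ EextF inc G S :=
  inter_subset_inter_right _ <|
    biInter_mono (fun _ hT => ⟨hGF hT.1, hT.2⟩) fun _ _ => subset_rfl

lemma extScale_lt_intScale_of_notMem_safeProj (hS : S ∈ F) (h : S ∉ safeProj inc n F) :
    extScale inc n F S < intScale inc n F S :=
  not_le.mp fun hle => h ⟨hS, hle⟩

namespace IsSubtreeForest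

variable [Finite ε]

lemma extScale_lt_of_forall_unsafe (hF : IsSubtreeForest inc F) (hT : T ∈ F)
    (he : e ∈ Eint inc T)
    (hunsafe : ∀ U ∈ F, U ⊆ T → e ∈ Eint inc U → extScale inc n F U < intScale inc n F U) :
    extScale inc n F T < n e := by
  revert he hunsafe
  apply (hF.finite.wellFoundedOn (r := (· ⊂ ·))).induction hT
  intro T hT ih he hunsafe
  have hTunsafe := hunsafe T hT subset_rfl he
  by_cases heT : e ∈ EintF inc F T
  · exact hTunsafe.trans_le (Nat.sInf_le ⟨e, heT, rfl⟩)
  obtain ⟨T', hT', heT'⟩ := exists_mem_childrenF_of_notMem_EintF he heT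
  calc extScale inc n F T < intScale inc n F T := hTunsafe
    _ ≤ extScale inc n F T' := hF.intScale_le_extScale hT hT'
    _ < n e := ih T' hT'.1 hT'.2.1 heT' fun U hU hUT' =>
      hunsafe U hU (hUT'.trans hT'.2.1.subset)

lemma lt_intScale_of_forall_unsafe (hF : IsSubtreeForest inc F) (hT : T ∈ F)
    (he : e ∈ Eext inc T)
    (hunsafe : ∀ U ∈ F, T ⊆ U → e ∈ Eext inc U → extScale inc n F U < intScale inc n F U) :
    n e < intScale inc n F T := by
  revert he hunsafe
  apply (hF.finite.wellFoundedOn (r := (· ⊃ ·))).induction hT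
  intro T hT ih he hunsafe
  have hTunsafe := hunsafe T hT subset_rfl he
  by_cases heT : e ∈ EextF inc F T
  · exact (le_csSup (toFinite (n '' _)).bddAbove ⟨e, heT, rfl⟩).trans_lt hTunsafe
  obtain ⟨A, hA, hTA, heA⟩ := exists_mem_childrenF_of_notMem_EextF hF.finite hT he heT
  calc n e < intScale inc n F A := ih A hA hTA.2.1 heA fun U hU hAU =>
        hunsafe U hU (hTA.2.1.subset.trans hAU)
    _ ≤ extScale inc n F T := hF.intScale_le_extScale hA hTA
    _ < intScale inc n F T := hTunsafe

lemma intScale_safeProj (hF : IsSubtreeForest inc F) (hS : S ∈ F) :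
    intScale inc n F S = intScale inc n (safeProj inc n F) S := by
  have hPF : safeProj inc n F ⊆ F := fun _ hU => hU.1
  refine csInf_eq_csInf_of_forall_exists_le ?_ ?_
  · rintro _ ⟨e, he, rfl⟩
    exact ⟨n e, ⟨e, EintF_subset_EintF_of_subset hF.finite hPF he, rfl⟩, le_rfl⟩
  rintro _ ⟨e, he, rfl⟩
  by_cases heF : e ∈ EintF inc F S
  · exact ⟨n e, ⟨e, heF, rfl⟩, le_rfl⟩
  obtain ⟨T, hT, heT⟩ := exists_mem_childrenF_of_notMem_EintF he.1 heF
  have hunsafe (U : Set V) (hU : U ∈ F) (hUT : U ⊆ T) (heU : e ∈ Eint inc U) :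
      extScale inc n F U < intScale inc n F U := by
    refine extScale_lt_intScale_of_notMem_safeProj hU fun hUP => he.2 ?_
    obtain ⟨W, hW, hUW⟩ := exists_mem_childrenF_superset (hF.finite.subset hPF) hUP
      (hUT.trans_ssubset hT.2.1)
    exact mem_biUnion hW (Eint_mono hUW heU)
  have hne := (EintF_nonempty_of_mem_childrenF hF.laminar hF.exists_cross hS hT).image n
  refine ⟨_, Nat.sInf_mem hne, ?_⟩
  calc intScale inc n F S ≤ extScale inc n F T := hF.intScale_le_extScale hS hT
    _ ≤ n e := (hF.extScale_lt_of_forall_unsafe hT.1 heT hunsafe).le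

lemma extScale_safeProj (hF : IsSubtreeForest inc F) (hS : S ∈ F) :
    extScale inc n F S = extScale inc n (safeProj inc n F) S := by
  have hPF : safeProj inc n F ⊆ F := fun _ hU => hU.1
  refine csSup_eq_csSup_of_forall_exists_le ?_ ?_
  · rintro _ ⟨e, he, rfl⟩
    exact ⟨n e, ⟨e, EextF_subset_EextF_of_subset hPF he, rfl⟩, le_rfl⟩
  rintro _ ⟨e, he, rfl⟩
  by_cases heF : e ∈ EextF inc F S
  · exact ⟨n e, ⟨e, heF, rfl⟩, le_rfl⟩
  obtain ⟨A, hA, hSA, heA⟩ := exists_mem_childrenF_of_notMem_EextF hF.finite hS he.1 heF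
  have hunsafe (U : Set V) (hU : U ∈ F) (hAU : A ⊆ U) (heU : e ∈ Eext inc U) :
      extScale inc n F U < intScale inc n F U :=
    extScale_lt_intScale_of_notMem_safeProj hU fun hUP =>
      heU.1 (mem_iInter₂.mp he.2 U ⟨hUP, hSA.2.1.trans_subset hAU⟩)
  have hne := (hF.EextF_nonempty hS).image n
  refine ⟨_, Nat.sSup_mem hne (toFinite _).bddAbove, ?_⟩
  calc n e ≤ intScale inc n F A := (hF.lt_intScale_of_forall_unsafe hA heA hunsafe).le
    _ ≤ extScale inc n F S := hF.intScale_le_extScale hA hSA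

end IsSubtreeForest

end

/-- main classification lemma. For every `S ∈ ℱ` one has
`int^n_ℱ(S) = int^n_{P^n[ℱ]}(S)` and `ext^n_ℱ(S) = ext^n_{P^n[ℱ]}(S)`.
The ambient tree structure enters through: laminarity of `ℱ`, the fact that a proper
subtree has an external edge internal to any strictly larger subtree (`hcross`), and
the fact that every subtree has some external edge (`hext`). -/
theorem safeProj_classification [Finite ε] (inc : ε → Set V) (n : ε → ℕ)
    (F : Set (Set V)) (hFfin : F.Finite)
    (hlam : ∀ S ∈ F, ∀ T ∈ F, S ⊆ T ∨ T ⊆ S ∨ S ∩ T = ∅)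
    (hcross : ∀ S ∈ F, ∀ T ∈ F, S ⊂ T → (Eext inc S ∩ Eint inc T).Nonempty)
    (hext : ∀ S ∈ F, (Eext inc S).Nonempty) :
    ∀ S ∈ F, intScale inc n F S = intScale inc n (safeProj inc n F) S ∧
      extScale inc n F S = extScale inc n (safeProj inc n F) S := by
  have hF : IsSubtreeForest inc F := ⟨hFfin, hlam, hcross, hext⟩
  exact fun S hS => ⟨hF.intScale_safeProj hS, hF.extScale_safeProj hS⟩
end

section
/- Decomposition of cut-set families: fixing a forest ℱ and a depth-≤1 cut set 𝒞 ⊆ 𝔠_ℱ, one has the disjoint-union identity ⊔_{𝒟 ∈ 𝔠_<[𝒞,ℱ]} ⊔_{ℰ ∈ 𝔠[𝒟,ℱ]} {𝒞 ⊔ ℰ} = 𝔠[𝒞,ℱ], where 𝔠[𝒞,ℱ] = {𝒟 ⊆ 𝔠_ℱ : Min(𝒟) = 𝒞} and 𝔠_<[𝒞,ℱ] = {𝒟 ⊆ 𝔠_ℱ of depth ≤ 1 : every e ∈ 𝒟 has some e' ∈ 𝒞 with e' < e}. -/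
/-!
Everything rests on one observation: if `𝒞` is an antichain and every element of `ℰ` lies
strictly above some element of `𝒞`, then `𝒞` and `ℰ` are disjoint and `Min (𝒞 ∪ ℰ) = 𝒞`.
Being strictly above `𝒞` passes from `Min ℰ` to `ℰ`, which gives the first half. Conversely,
a cut set `𝒳` with `Min 𝒳 = 𝒞` is recovered from the pair `𝒟 = Min (𝒳 \ 𝒞)`, `ℰ = 𝒳 \ 𝒞`,
and disjointness forces `ℰ = (𝒞 ∪ ℰ) \ 𝒞`, hence uniqueness.
-/

open scoped Classical

variable {α : Type*}

/-- The minimal elements of a finite subset of a poset. -/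
noncomputable def minElems [Preorder α] (C : Finset α) : Finset α :=
  C.filter fun e => ∀ f ∈ C, ¬ f < e

section Preorder

variable [Preorder α]

theorem mem_minElems {S : Finset α} {e : α} :
    e ∈ minElems S ↔ e ∈ S ∧ ∀ f ∈ S, ¬ f < e :=
  Finset.mem_filter

theorem minElems_subset (S : Finset α) : minElems S ⊆ S :=
  Finset.filter_subset _ _

theorem minElems_eq_self_iff {S : Finset α} :
    minElems S = S ↔ ∀ x ∈ S, ∀ c ∈ S, ¬ c < x :=
  Finset.filter_eq_self

theorem minElems_minElems (S : Finset α) : minElems (minElems S) = minElems S :=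
  minElems_eq_self_iff.2 fun _ hx c hc => (mem_minElems.1 hx).2 c (minElems_subset S hc)

theorem exists_mem_minElems_le {S : Finset α} {e : α} (he : e ∈ S) :
    ∃ m ∈ minElems S, m ≤ e := by
  obtain ⟨m, hm, hmin⟩ := (S.filter (· ≤ e)).exists_minimal ⟨e, by simp [he]⟩
  rw [Finset.mem_filter] at hm
  refine ⟨m, mem_minElems.2 ⟨hm.1, fun f hf hfm => ?_⟩, hm.2⟩
  exact hfm.not_ge (hmin (Finset.mem_filter.2 ⟨hf, hfm.le.trans hm.2⟩) hfm.le)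

def StrictlyAbove (C E : Finset α) : Prop :=
  ∀ e ∈ E, ∃ c ∈ C, c < e

theorem StrictlyAbove.mono {C E E' : Finset α} (h : StrictlyAbove C E) (hE' : E' ⊆ E) :
    StrictlyAbove C E' :=
  fun e he => h e (hE' he)

theorem StrictlyAbove.of_minElems {C E : Finset α} (h : StrictlyAbove C (minElems E)) :
    StrictlyAbove C E := by
  intro e he
  obtain ⟨m, hm, hme⟩ := exists_mem_minElems_le he
  obtain ⟨c, hc, hcm⟩ := h m hm
  exact ⟨c, hc, hcm.trans_le hme⟩

theorem StrictlyAbove.disjoint {C E : Finset α} (hC : minElems C = C) (h : StrictlyAbove C E) :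
    Disjoint C E := by
  rw [Finset.disjoint_left]
  intro x hxC hxE
  obtain ⟨c, hc, hcx⟩ := h x hxE
  exact minElems_eq_self_iff.1 hC x hxC c hc hcx

theorem StrictlyAbove.minElems_union {C E : Finset α} (hC : minElems C = C)
    (h : StrictlyAbove C E) : minElems (C ∪ E) = C := by
  have hCmin := minElems_eq_self_iff.1 hC
  ext x
  simp only [mem_minElems, Finset.mem_union]
  constructor
  · rintro ⟨hx | hx, hmin⟩
    · exact hx
    · obtain ⟨c, hc, hcx⟩ := h x hx
      exact absurd hcx (hmin c (Or.inl hc))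
  · refine fun hx => ⟨Or.inl hx, ?_⟩
    rintro f (hf | hf) hfx
    · exact hCmin x hx f hf hfx
    · obtain ⟨c, hc, hcf⟩ := h f hf
      exact hCmin x hx c hc (hcf.trans hfx)

end Preorder

theorem strictlyAbove_sdiff_minElems [PartialOrder α] (X : Finset α) :
    StrictlyAbove (minElems X) (X \ minElems X) := by
  intro e he
  rw [Finset.mem_sdiff] at he
  obtain ⟨m, hm, hme⟩ := exists_mem_minElems_le he.1
  exact ⟨m, hm, hme.lt_of_ne fun h => he.2 (h ▸ hm)⟩

theorem cutset_decomposition_general [PartialOrder α]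
    (A C : Finset α) (hCA : C ⊆ A) (hCdepth : minElems C = C) :
    (∀ D E : Finset α,
        (D ⊆ A ∧ minElems D = D ∧ ∀ e ∈ D, ∃ e' ∈ C, e' < e) →
        (E ⊆ A ∧ minElems E = D) →
        Disjoint C E ∧ C ∪ E ⊆ A ∧ minElems (C ∪ E) = C) ∧
      ∀ X : Finset α, X ⊆ A → minElems X = C →
        ∃! p : Finset α × Finset α,
          (p.1 ⊆ A ∧ minElems p.1 = p.1 ∧ ∀ e ∈ p.1, ∃ e' ∈ C, e' < e) ∧
          (p.2 ⊆ A ∧ minElems p.2 = p.1) ∧ X = C ∪ p.2 := by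
  refine ⟨fun D E ⟨_, _, hD⟩ ⟨hEA, hED⟩ => ?_, fun X hXA hXC => ?_⟩
  · have hE : StrictlyAbove C E := StrictlyAbove.of_minElems (hED ▸ hD)
    exact ⟨hE.disjoint hCdepth, Finset.union_subset hCA hEA, hE.minElems_union hCdepth⟩
  · have hE : StrictlyAbove C (X \ C) := hXC ▸ strictlyAbove_sdiff_minElems X
    have hEA : X \ C ⊆ A := Finset.sdiff_subset.trans hXA
    have hCX : C ⊆ X := hXC ▸ minElems_subset X
    refine ⟨(minElems (X \ C), X \ C), ⟨⟨(minElems_subset _).trans hEA, minElems_minElems _,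
      hE.mono (minElems_subset _)⟩, ⟨hEA, rfl⟩, (Finset.union_sdiff_of_subset hCX).symm⟩, ?_⟩
    rintro ⟨D', E'⟩ ⟨⟨-, -, hD'⟩, ⟨-, hE'D' : minElems E' = D'⟩, rfl⟩
    have hE' : StrictlyAbove C E' := StrictlyAbove.of_minElems (hE'D' ▸ hD')
    rw [Finset.union_sdiff_cancel_left (hE'.disjoint hCdepth), hE'D']

/-- decomposition of cut-set families. Fix a set `A` of available
cut edges of a rooted tree (a poset in which the set of elements below any given
element is a chain) and a depth-`≤ 1` cut set `𝒞 ⊆ A` (i.e. `Min 𝒞 = 𝒞`).  Then: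
for every depth-`≤ 1` cut set `𝒟 ⊆ A` lying strictly above `𝒞` and every cut set
`ℰ ⊆ A` with `Min ℰ = 𝒟`, the union `𝒞 ⊔ ℰ` is a disjoint union and lies in
`𝔠[𝒞] = {𝒳 ⊆ A : Min 𝒳 = 𝒞}`; and conversely, every `𝒳 ∈ 𝔠[𝒞]` arises in this
way from a unique pair `(𝒟, ℰ)`.  In other words,
`⊔_{𝒟 ∈ 𝔠_<[𝒞]} ⊔_{ℰ ∈ 𝔠[𝒟]} {𝒞 ⊔ ℰ} = 𝔠[𝒞]`. -/
theorem cutset_decomposition [PartialOrder α]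
    (htree : ∀ e : α, IsChain (· ≤ ·) {f : α | f ≤ e})
    (A C : Finset α) (hCA : C ⊆ A) (hCdepth : minElems C = C) :
    (∀ D E : Finset α,
        (D ⊆ A ∧ minElems D = D ∧ ∀ e ∈ D, ∃ e' ∈ C, e' < e) →
        (E ⊆ A ∧ minElems E = D) →
        Disjoint C E ∧ C ∪ E ⊆ A ∧ minElems (C ∪ E) = C) ∧
      ∀ X : Finset α, X ⊆ A → minElems X = C →
        ∃! p : Finset α × Finset α,
          (p.1 ⊆ A ∧ minElems p.1 = p.1 ∧ ∀ e ∈ p.1, ∃ e' ∈ C, e' < e) ∧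
          (p.2 ⊆ A ∧ minElems p.2 = p.1) ∧ X = C ∪ p.2 :=
  cutset_decomposition_general A C hCA hCdepth
end
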